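/- Let $n \geq 2$ and $2 < \beta < 2n$. Define the radial function $h_{\beta}$ on $\mathbb{R}^{2n}$ by $h_{\beta}(x) = 1$ for $|x| < 1$ and $h_{\beta}(x) = |x|^{-\beta}$ for $|x| \geq 1$. Then there exists a unique radially symmetric continuous function $w$ on $\mathbb{R}^{2n}$ vanishing at infinity such that $\Delta w = h_{\beta}$ in $\mathbb{R}^{2n}$; moreover there is a constant $C_{n,\beta}>0$ such that $|w(x)| \leq C_{n,\beta}\, h_{\beta-2}(x)$ for all $x \in \mathbb{R}^{2n}$. -/

import Mathlib

open MeasureTheory Filter Real Set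

noncomputable section

/-- The Laplacian of a real-valued function on Euclidean space `ℝ^m`,
computed as the sum of the second directional derivatives along coordinate directions. -/
def lap {m : ℕ} (f : EuclideanSpace ℝ (Fin m) → ℝ) (x : EuclideanSpace ℝ (Fin m)) : ℝ :=
  ∑ i : Fin m, fderiv ℝ (fun y => fderiv ℝ f y (EuclideanSpace.single i 1)) x
    (EuclideanSpace.single i 1)

/-- The iterated Laplacian `Δ^k` on `ℝ^m`. -/
def lapPow (m k : ℕ) (f : EuclideanSpace ℝ (Fin m) → ℝ) : EuclideanSpace ℝ (Fin m) → ℝ :=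
  (fun g => lap g)^[k] f

/-- The iterated negative Laplacian `(-Δ)^k` on `ℝ^m`. -/
def negLapPow (m k : ℕ) (f : EuclideanSpace ℝ (Fin m) → ℝ) : EuclideanSpace ℝ (Fin m) → ℝ :=
  (fun g x => -(lap g x))^[k] f

/-- The constant `γₙ = 2^(2n-1) (n-1)! πⁿ`. -/
def gam (n : ℕ) : ℝ := 2 ^ (2*n - 1) * (Nat.factorial (n-1)) * π ^ n

/-- The filter of neighborhoods of infinity (`|x| → ∞`) on `ℝ^m`. -/
def atInfty (m : ℕ) : Filter (EuclideanSpace ℝ (Fin m)) :=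
  Filter.comap (fun x => ‖x‖) Filter.atTop

/-- `v(x) = O(ln |x|)` as `|x| → ∞`. -/
def BigOLog {m : ℕ} (v : EuclideanSpace ℝ (Fin m) → ℝ) : Prop :=
  ∃ C > 0, ∃ R > 1, ∀ x : EuclideanSpace ℝ (Fin m), R ≤ ‖x‖ → |v x| ≤ C * Real.log ‖x‖

/-- A function on `ℝ^m` is radially symmetric if its value depends only on `|x|`. -/
def Radial {m : ℕ} (g : EuclideanSpace ℝ (Fin m) → ℝ) : Prop :=
  ∀ x y : EuclideanSpace ℝ (Fin m), ‖x‖ = ‖y‖ → g x = g y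

/-- The radial profile `h_γ(x) = 1` for `|x| < 1` and `h_γ(x) = |x|^{-γ}` for `|x| ≥ 1`. -/
def hfun (m : ℕ) (γ : ℝ) (x : EuclideanSpace ℝ (Fin m)) : ℝ :=
  if ‖x‖ < 1 then 1 else ‖x‖ ^ (-γ)

/-! In the variable `t = ‖x‖²` a radial function `w x = Φ ‖x‖²` on `ℝ^{2n}` has
`Δ w = 4 t Φ'' + 4 n Φ'`, so `Δ w = h_β` is a first-order linear ODE for `Φ'`. An explicit solution
is affine for `t < 1` and `c₁ t^(1-β/2) + c₂ t^(1-n)` for `t ≥ 1`, glued in `C²`; it decays like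
`t^(1-β/2) = |x|^(2-β)`, which is the bound. For another solution `v`, positivity of `Δ v` forces
the derivative `Ψ` of its profile to be differentiable and to solve the same ODE, so
`Ψ = Φ' + K t^(-n)`. A nonzero `K` would give the profile a `t^(1-n)` singularity at `0`,
contradicting continuity of `v` at the origin; so the two profiles differ by a constant, which
vanishes at infinity. -/

open Topology

namespace RadialPoisson

theorem hasDerivAt_ite_lt {f g f' g' : ℝ → ℝ} {c : ℝ}
    (hf : ∀ t ≤ c, HasDerivAt f (f' t) t) (hg : ∀ t, c ≤ t → HasDerivAt g (g' t) t)
    (hv : f c = g c) (hd : f' c = g' c) (t : ℝ) :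
    HasDerivAt (fun s => if s < c then f s else g s) (if t < c then f' t else g' t) t := by
  rcases lt_trichotomy t c with h | rfl | h
  · rw [if_pos h]
    refine (hf t h.le).congr_of_eventuallyEq ?_
    filter_upwards [Iio_mem_nhds h] with s hs
    rw [if_pos (mem_Iio.mp hs)]
  · rw [if_neg (lt_irrefl t)]
    have hleft : HasDerivWithinAt (fun s => if s < t then f s else g s) (g' t) (Iic t) t := by
      refine ((hf t le_rfl).hasDerivWithinAt.congr_deriv hd).congr (fun y hy => ?_) (by simp [hv])
      rcases (mem_Iic.mp hy).lt_or_eq with h' | rfl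
      · rw [if_pos h']
      · rw [if_neg (lt_irrefl y), hv]
    have hright : HasDerivWithinAt (fun s => if s < t then f s else g s) (g' t) (Ici t) t :=
      (hg t le_rfl).hasDerivWithinAt.congr (fun y hy => by rw [if_neg (not_lt.mpr hy)]) (by simp)
    simpa [Iic_union_Ici] using hleft.union hright
  · rw [if_neg (not_lt.mpr h.le)]
    refine (hg t h.le).congr_of_eventuallyEq ?_
    filter_upwards [Ioi_mem_nhds h] with s hs
    rw [if_neg (not_lt.mpr (le_of_lt hs))]

theorem eq_of_hasDerivAt_eq_zero {F : ℝ → ℝ} {s : Set ℝ} (hs : IsOpen s) (hs' : IsPreconnected s)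
    (hF : ∀ t ∈ s, HasDerivAt F 0 t) {a b : ℝ} (ha : a ∈ s) (hb : b ∈ s) : F a = F b :=
  hs.is_const_of_deriv_eq_zero hs' (fun t ht => (hF t ht).differentiableAt.differentiableWithinAt)
    (fun t ht => (hF t ht).deriv) ha hb

theorem exists_eq_mul_rpow_neg_of_euler {D D' : ℝ → ℝ} {p : ℝ}
    (hD : ∀ t > 0, HasDerivAt D (D' t) t) (hode : ∀ t > 0, t * D' t + p * D t = 0) :
    ∃ K, ∀ t > 0, D t = K * t ^ (-p) := by
  have hconst : ∀ t ∈ Ioi (0:ℝ), HasDerivAt (fun u => u ^ p * D u) 0 t := by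
    intro t (ht : 0 < t)
    refine ((Real.hasDerivAt_rpow_const (p := p) (Or.inl ht.ne')).mul (hD t ht)).congr_deriv ?_
    have hsplit : t ^ p = t ^ (p - 1) * t := by
      rw [Real.rpow_sub_one ht.ne', div_mul_cancel₀ _ ht.ne']
    rw [hsplit]
    linear_combination t ^ (p - 1) * hode t ht
  refine ⟨D 1, fun t ht => ?_⟩
  have h := eq_of_hasDerivAt_eq_zero isOpen_Ioi isPreconnected_Ioi hconst ht (mem_Ioi.mpr one_pos)
  rw [Real.one_rpow, one_mul] at h
  rw [← h, Real.rpow_neg ht.le, mul_comm, inv_mul_cancel_left₀ (Real.rpow_pos_of_pos ht p).ne']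

theorem eq_zero_of_hasDerivAt_mul_rpow_neg {F : ℝ → ℝ} {K p L : ℝ} (hp : 1 < p)
    (hF : ∀ᶠ t in 𝓝[>] 0, HasDerivAt F (K * t ^ (-p)) t)
    (hlim : Tendsto F (𝓝[>] 0) (𝓝 L)) : K = 0 := by
  obtain ⟨δ, hδ, hsub⟩ := mem_nhdsGT_iff_exists_Ioo_subset.mp hF
  have hG : ∀ t ∈ Ioo 0 δ, HasDerivAt (fun u => F u - K / (1 - p) * u ^ (1 - p)) 0 t := by
    intro t ht
    refine ((hsub ht).sub ((Real.hasDerivAt_rpow_const (p := 1 - p)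
      (Or.inl ht.1.ne')).const_mul (K / (1 - p)))).congr_deriv ?_
    rw [show 1 - p - 1 = -p by ring, ← mul_assoc, div_mul_cancel₀ _ (by linarith : 1 - p ≠ 0),
      sub_self]
  set C := F (δ / 2) - K / (1 - p) * (δ / 2) ^ (1 - p)
  have hconst : ∀ᶠ t in 𝓝[>] 0, K / (1 - p) * t ^ (1 - p) = F t - C := by
    filter_upwards [Ioo_mem_nhdsGT hδ] with t ht
    have := eq_of_hasDerivAt_eq_zero isOpen_Ioo isPreconnected_Ioo hG ht
      ⟨half_pos hδ, half_lt_self hδ⟩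
    linarith
  by_contra hK
  have hblow : Tendsto (fun t : ℝ => t ^ (1 - p)) (𝓝[>] 0) atTop :=
    tendsto_rpow_neg_nhdsGT_zero (by linarith)
  have hfin : Tendsto (fun t : ℝ => t ^ (1 - p)) (𝓝[>] 0) (𝓝 ((L - C) / (K / (1 - p)))) := by
    have hK' : K / (1 - p) ≠ 0 := div_ne_zero hK (by linarith)
    refine ((hlim.sub_const C).div_const (K / (1 - p))).congr' ?_
    filter_upwards [hconst] with t ht
    rw [← ht, mul_div_cancel_left₀ _ hK']
  exact not_tendsto_nhds_of_tendsto_atTop hblow _ hfin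

section Euclidean

variable {E : Type*} [NormedAddCommGroup E] {m : ℕ}

theorem hasFDerivAt_comp_norm_sq [InnerProductSpace ℝ E] {Θ : ℝ → ℝ} {d : ℝ} {x : E}
    (hΘ : HasDerivAt Θ d (‖x‖ ^ 2)) :
    HasFDerivAt (fun y => Θ (‖y‖ ^ 2)) (d • 2 • innerSL ℝ x) x :=
  hΘ.comp_hasFDerivAt x (hasStrictFDerivAt_norm_sq x).hasFDerivAt

theorem fderiv_comp_norm_sq_single {Θ : ℝ → ℝ} {d : ℝ} {x : EuclideanSpace ℝ (Fin m)}
    (hΘ : HasDerivAt Θ d (‖x‖ ^ 2)) (i : Fin m) :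
    fderiv ℝ (fun y => Θ (‖y‖ ^ 2)) x (EuclideanSpace.single i 1) = d * (2 * x i) := by
  rw [(hasFDerivAt_comp_norm_sq hΘ).fderiv]
  simp [EuclideanSpace.inner_single_right]

theorem norm_sqrt_div_norm_smul [NormedSpace ℝ E] {y : E} (hy : y ≠ 0) (t : ℝ) :
    ‖(√t / ‖y‖) • y‖ = √t := by
  rw [norm_smul, Real.norm_of_nonneg (by positivity),
    div_mul_cancel₀ _ (norm_ne_zero_iff.mpr hy)]

theorem differentiableAt_norm_sq_of_comp [NormedSpace ℝ E] {F : E → ℝ} {G : ℝ → ℝ} {y : E}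
    (hy : y ≠ 0) (hF : DifferentiableAt ℝ F y) (hG : ∀ t > 0, F ((√t / ‖y‖) • y) = G t) :
    DifferentiableAt ℝ G (‖y‖ ^ 2) := by
  have hy' : 0 < ‖y‖ := norm_pos_iff.mpr hy
  have hσ : DifferentiableAt ℝ (fun t => (√t / ‖y‖) • y) (‖y‖ ^ 2) :=
    ((Real.hasDerivAt_sqrt (by positivity)).differentiableAt.div_const _).smul_const y
  have hσy : (√(‖y‖ ^ 2) / ‖y‖) • y = y := by
    rw [Real.sqrt_sq hy'.le, div_self hy'.ne', one_smul]
  have hcomp : DifferentiableAt ℝ (fun t => F ((√t / ‖y‖) • y)) (‖y‖ ^ 2) :=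
    DifferentiableAt.comp (g := F) _ (by rwa [hσy]) hσ
  refine hcomp.congr_of_eventuallyEq ?_
  filter_upwards [Ioi_mem_nhds (by positivity : 0 < ‖y‖ ^ 2)] with t ht
  exact (hG t ht).symm

theorem lap_eq_of_fderiv_single_eq {v : EuclideanSpace ℝ (Fin m) → ℝ} {Θ : ℝ → ℝ} {d : ℝ}
    {x : EuclideanSpace ℝ (Fin m)}
    (hv : ∀ᶠ y in 𝓝 x, ∀ i, fderiv ℝ v y (EuclideanSpace.single i 1) = Θ (‖y‖ ^ 2) * (2 * y i))
    (hΘ : HasDerivAt Θ d (‖x‖ ^ 2)) :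
    lap v x = 2 * m * Θ (‖x‖ ^ 2) + 4 * ‖x‖ ^ 2 * d := by
  have hi : ∀ i : Fin m, fderiv ℝ (fun y => fderiv ℝ v y (EuclideanSpace.single i 1)) x
      (EuclideanSpace.single i 1) = 2 * Θ (‖x‖ ^ 2) + 4 * d * x i ^ 2 := by
    intro i
    have hpi : HasFDerivAt (fun y : EuclideanSpace ℝ (Fin m) => 2 * y i)
        ((2 : ℝ) • (EuclideanSpace.proj i : EuclideanSpace ℝ (Fin m) →L[ℝ] ℝ)) x :=
      ((EuclideanSpace.proj (𝕜 := ℝ) (ι := Fin m) i).hasFDerivAt (x := x)).const_mul (2 : ℝ)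
    have hF := ((hasFDerivAt_comp_norm_sq hΘ).mul hpi).congr_of_eventuallyEq
      (hv.mono fun y hy => hy i)
    rw [hF.fderiv]
    simp [EuclideanSpace.inner_single_right]
    ring
  rw [lap, Finset.sum_congr rfl fun i _ => hi i, Finset.sum_add_distrib, Finset.sum_const,
    Finset.card_univ, Fintype.card_fin, ← Finset.mul_sum, ← EuclideanSpace.real_norm_sq_eq,
    nsmul_eq_mul]
  ring

def diagUnit (m : ℕ) : EuclideanSpace ℝ (Fin m) := WithLp.toLp 2 fun _ => (√m)⁻¹

theorem diagUnit_apply (i : Fin m) : diagUnit m i = (√m)⁻¹ := rfl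

theorem norm_sqrt_smul_diagUnit (hm : m ≠ 0) (t : ℝ) : ‖√t • diagUnit m‖ = √t := by
  have hnorm : ‖diagUnit m‖ = 1 := by
    rw [← pow_eq_one_iff_of_nonneg (norm_nonneg _) two_ne_zero, EuclideanSpace.real_norm_sq_eq]
    simp [diagUnit_apply, inv_pow, Real.sq_sqrt (Nat.cast_nonneg m), hm]
  rw [norm_smul, hnorm, mul_one, Real.norm_of_nonneg (Real.sqrt_nonneg t)]

/-- The profile of `v` in the squared radius, sampled on the diagonal ray because no coordinate
vanishes there. -/
def radialProfile (v : EuclideanSpace ℝ (Fin m) → ℝ) (t : ℝ) : ℝ := v (√t • diagUnit m)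

variable {v : EuclideanSpace ℝ (Fin m) → ℝ}

theorem continuous_radialProfile (hv : Continuous v) : Continuous (radialProfile v) :=
  hv.comp (Real.continuous_sqrt.smul continuous_const)

theorem Radial.apply_eq_radialProfile (hv : Radial v) (hm : m ≠ 0)
    (y : EuclideanSpace ℝ (Fin m)) : v y = radialProfile v (‖y‖ ^ 2) :=
  hv _ _ (by rw [norm_sqrt_smul_diagUnit hm, Real.sqrt_sq (norm_nonneg y)])

theorem Radial.apply_sqrt_div_norm_smul (hv : Radial v) (hm : m ≠ 0)
    {y : EuclideanSpace ℝ (Fin m)} (hy : y ≠ 0) (t : ℝ) :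
    v ((√t / ‖y‖) • y) = radialProfile v t :=
  hv _ _ (by rw [norm_sqrt_div_norm_smul hy, norm_sqrt_smul_diagUnit hm])

theorem Radial.fderiv_apply_single (hv : Radial v) (hm : m ≠ 0) {y : EuclideanSpace ℝ (Fin m)}
    (hy : y ≠ 0) (i : Fin m) :
    fderiv ℝ v y (EuclideanSpace.single i 1) = deriv (radialProfile v) (‖y‖ ^ 2) * (2 * y i) := by
  by_cases hd : DifferentiableAt ℝ (radialProfile v) (‖y‖ ^ 2)
  · have hv' : v = fun z => radialProfile v (‖z‖ ^ 2) :=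
      funext (Radial.apply_eq_radialProfile hv hm)
    rw [show fderiv ℝ v y = fderiv ℝ (fun z => radialProfile v (‖z‖ ^ 2)) y by rw [← hv'],
      fderiv_comp_norm_sq_single hd.hasDerivAt]
  · have hnd : ¬ DifferentiableAt ℝ v y := fun h =>
      hd (differentiableAt_norm_sq_of_comp hy h fun t _ =>
        Radial.apply_sqrt_div_norm_smul hv hm hy t)
    rw [fderiv_zero_of_not_differentiableAt hnd, deriv_zero_of_not_differentiableAt hd]
    simp

/-- `lap` is junk-valued, so a radial `v` need not be twice differentiable; but where `lap v ≠ 0`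
some second partial derivative exists, and that already forces the profile derivative to be
differentiable and `lap v` to be the radial Laplacian in `t = ‖x‖²`. -/
theorem Radial.lap_eq (hv : Radial v) (hm : m ≠ 0) {t : ℝ} (ht : 0 < t)
    (hlap : lap v (√t • diagUnit m) ≠ 0) :
    DifferentiableAt ℝ (deriv (radialProfile v)) t ∧
      lap v (√t • diagUnit m) = 2 * m * deriv (radialProfile v) t +
        4 * t * deriv (deriv (radialProfile v)) t := by
  set Ψ := deriv (radialProfile v)
  set x₀ := √t • diagUnit m
  have hx₀ : ‖x₀‖ ^ 2 = t := by rw [norm_sqrt_smul_diagUnit hm, Real.sq_sqrt ht.le]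
  have hx₀i : ∀ i, x₀ i ≠ 0 := fun i => by
    simp [x₀, diagUnit_apply, Real.sqrt_ne_zero'.mpr ht, hm]
  have hx₀0 : x₀ ≠ 0 := by
    rw [← norm_ne_zero_iff, ← pow_ne_zero_iff two_ne_zero, hx₀]; exact ht.ne'
  have hloc : ∀ᶠ y in 𝓝 x₀, ∀ i,
      fderiv ℝ v y (EuclideanSpace.single i 1) = Ψ (‖y‖ ^ 2) * (2 * y i) := by
    filter_upwards [isOpen_ne.mem_nhds hx₀0] with y hy
    exact Radial.fderiv_apply_single hv hm hy
  obtain ⟨i, hi⟩ :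
      ∃ i, DifferentiableAt ℝ (fun y => fderiv ℝ v y (EuclideanSpace.single i 1)) x₀ := by
    by_contra! h
    exact hlap (Finset.sum_eq_zero fun i _ => by simp [fderiv_zero_of_not_differentiableAt (h i)])
  have hΨx : DifferentiableAt ℝ (fun y => Ψ (‖y‖ ^ 2)) x₀ := by
    have hcoord : DifferentiableAt ℝ (fun y : EuclideanSpace ℝ (Fin m) => 2 * y i) x₀ :=
      ((EuclideanSpace.proj (𝕜 := ℝ) (ι := Fin m) i).differentiableAt).const_mul 2
    have h2x₀i : 2 * x₀ i ≠ 0 := mul_ne_zero two_ne_zero (hx₀i i)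
    refine (hi.mul (hcoord.inv h2x₀i)).congr_of_eventuallyEq ?_
    filter_upwards [hloc, hcoord.continuousAt.eventually_ne h2x₀i] with y hy hyi
    rw [Pi.mul_apply, Pi.inv_apply, hy i, mul_inv_cancel_right₀ hyi]
  have hΨ : DifferentiableAt ℝ Ψ t := by
    rw [← hx₀]
    refine differentiableAt_norm_sq_of_comp hx₀0 hΨx fun s hs => ?_
    rw [norm_sqrt_div_norm_smul hx₀0, Real.sq_sqrt hs.le]
  refine ⟨hΨ, ?_⟩
  rw [lap_eq_of_fderiv_single_eq hloc (by rw [hx₀]; exact hΨ.hasDerivAt), hx₀]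

end Euclidean

def hProfile (β t : ℝ) : ℝ := if t < 1 then 1 else t ^ (-(β / 2))

theorem hProfile_pos (β t : ℝ) : 0 < hProfile β t := by
  unfold hProfile
  split_ifs with h
  · exact one_pos
  · exact Real.rpow_pos_of_pos (by linarith [not_lt.mp h]) _

theorem hfun_eq_hProfile (m : ℕ) (γ : ℝ) (x : EuclideanSpace ℝ (Fin m)) :
    hfun m γ x = hProfile γ (‖x‖ ^ 2) := by
  have hlt : ‖x‖ ^ 2 < 1 ↔ ‖x‖ < 1 := sq_lt_one_iff₀ (norm_nonneg x)
  rw [hfun, hProfile, if_congr hlt rfl rfl, ← Real.rpow_natCast,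
    ← Real.rpow_mul (norm_nonneg x)]
  norm_num [mul_div_cancel₀]

section Profile

variable (n : ℕ) (β : ℝ)

def coeffPart : ℝ := ((2 - β) * (2 * n - β))⁻¹

def coeffHom : ℝ := β / (4 * n * (2 * n - β) * (n - 1))

/-- For `t ≥ 1`: the particular solution `coeffPart t^(1-β/2)` of `4 t Φ'' + 4 n Φ' = t^(-β/2)`
plus the decaying homogeneous solution `coeffHom t^(1-n)`; for `t < 1`: affine with `4 n Φ' = 1`.
`coeffHom` makes `Φ'` continuous at `1`, and then `Φ` is `C²`. -/
def wProfile (t : ℝ) : ℝ :=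
  if t < 1 then coeffPart n β + coeffHom n β - (1 - t) / (4 * n)
  else coeffPart n β * t ^ (1 - β / 2) + coeffHom n β * t ^ (1 - (n : ℝ))

def wProfile' (t : ℝ) : ℝ :=
  if t < 1 then 1 / (4 * n)
  else coeffPart n β * (1 - β / 2) * t ^ (-(β / 2)) + coeffHom n β * (1 - n) * t ^ (-(n : ℝ))

def wProfile'' (t : ℝ) : ℝ :=
  if t < 1 then 0
  else coeffPart n β * (1 - β / 2) * (-(β / 2)) * t ^ (-(β / 2) - 1) +
    coeffHom n β * (1 - n) * (-n) * t ^ (-(n : ℝ) - 1)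

variable {n β}

theorem one_lt_of_lt_two_mul (hβ : 2 < β) (hβn : β < 2 * n) : (1 : ℝ) < n := by linarith

theorem two_mul_ne_zero_of_lt_two_mul (hβ : 2 < β) (hβn : β < 2 * n) : 2 * n ≠ 0 := by
  have := one_lt_of_lt_two_mul hβ hβn
  have : n ≠ 0 := by rintro rfl; norm_num at this
  omega

theorem coeffPart_mul_sub (hβ : 2 < β) (hβn : β < 2 * n) :
    coeffPart n β * (1 - β / 2) * (4 * n - 2 * β) = 1 := by
  rw [coeffPart]
  field_simp [show (2 : ℝ) - β ≠ 0 by linarith, show 2 * (n : ℝ) - β ≠ 0 by linarith]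
  ring

theorem coeff_deriv_match (hβ : 2 < β) (hβn : β < 2 * n) :
    coeffPart n β * (1 - β / 2) + coeffHom n β * (1 - n) = 1 / (4 * n) := by
  have := one_lt_of_lt_two_mul hβ hβn
  rw [coeffPart, coeffHom]
  field_simp [show (2 : ℝ) - β ≠ 0 by linarith, show 2 * (n : ℝ) - β ≠ 0 by linarith,
    show (n : ℝ) - 1 ≠ 0 by linarith, show (n : ℝ) ≠ 0 by linarith]
  ring

theorem coeff_second_deriv_match (hβ : 2 < β) (hβn : β < 2 * n) :
    coeffPart n β * (1 - β / 2) * (-(β / 2)) + coeffHom n β * (1 - n) * (-n) = 0 := by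
  have := one_lt_of_lt_two_mul hβ hβn
  rw [coeffPart, coeffHom]
  field_simp [show (2 : ℝ) - β ≠ 0 by linarith, show 2 * (n : ℝ) - β ≠ 0 by linarith,
    show (n : ℝ) - 1 ≠ 0 by linarith, show (n : ℝ) ≠ 0 by linarith]
  ring

theorem hasDerivAt_wProfile (hβ : 2 < β) (hβn : β < 2 * n) (t : ℝ) :
    HasDerivAt (wProfile n β) (wProfile' n β t) t := by
  have hinner : ∀ s ≤ (1 : ℝ), HasDerivAt
      (fun u : ℝ => coeffPart n β + coeffHom n β - (1 - u) / (4 * n)) (1 / (4 * n)) s := by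
    intro s _
    refine ((((hasDerivAt_id' s).const_sub 1).div_const (4 * (n : ℝ))).const_sub
      (coeffPart n β + coeffHom n β)).congr_deriv ?_
    ring
  have houter : ∀ s, 1 ≤ s → HasDerivAt
      (fun u : ℝ => coeffPart n β * u ^ (1 - β / 2) + coeffHom n β * u ^ (1 - (n : ℝ)))
      (coeffPart n β * (1 - β / 2) * s ^ (-(β / 2)) + coeffHom n β * (1 - n) * s ^ (-(n : ℝ)))
      s := by
    intro s hs
    have hs0 : s ≠ 0 := by positivity
    refine (((Real.hasDerivAt_rpow_const (p := 1 - β / 2) (Or.inl hs0)).const_mul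
      (coeffPart n β)).add ((Real.hasDerivAt_rpow_const (p := 1 - (n : ℝ)) (Or.inl hs0)).const_mul
      (coeffHom n β))).congr_deriv ?_
    rw [show 1 - β / 2 - 1 = -(β / 2) by ring, show 1 - (n : ℝ) - 1 = -(n : ℝ) by ring]
    ring
  refine hasDerivAt_ite_lt hinner houter (by simp) ?_ t
  simpa using (coeff_deriv_match hβ hβn).symm

theorem hasDerivAt_wProfile' (hβ : 2 < β) (hβn : β < 2 * n) (t : ℝ) :
    HasDerivAt (wProfile' n β) (wProfile'' n β t) t := by
  have houter : ∀ s, 1 ≤ s → HasDerivAt (fun u : ℝ =>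
      coeffPart n β * (1 - β / 2) * u ^ (-(β / 2)) + coeffHom n β * (1 - n) * u ^ (-(n : ℝ)))
      (coeffPart n β * (1 - β / 2) * (-(β / 2)) * s ^ (-(β / 2) - 1) +
        coeffHom n β * (1 - n) * (-n) * s ^ (-(n : ℝ) - 1)) s := by
    intro s hs
    have hs0 : s ≠ 0 := by positivity
    refine (((Real.hasDerivAt_rpow_const (p := -(β / 2)) (Or.inl hs0)).const_mul
      (coeffPart n β * (1 - β / 2))).add ((Real.hasDerivAt_rpow_const (p := -(n : ℝ))
      (Or.inl hs0)).const_mul (coeffHom n β * (1 - n)))).congr_deriv ?_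
    ring
  refine hasDerivAt_ite_lt (fun s _ => hasDerivAt_const s _) houter ?_ ?_ t
  · simpa using (coeff_deriv_match hβ hβn).symm
  · simpa using (coeff_second_deriv_match hβ hβn).symm

theorem wProfile_ode (hβ : 2 < β) (hβn : β < 2 * n) (t : ℝ) :
    4 * n * wProfile' n β t + 4 * t * wProfile'' n β t = hProfile β t := by
  unfold wProfile' wProfile'' hProfile
  split_ifs with h
  · rw [mul_zero, add_zero, mul_one_div_cancel]
    linarith [one_lt_of_lt_two_mul hβ hβn]
  · have ht : 0 < t := by linarith [not_lt.mp h]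
    have hsplit : ∀ p : ℝ, t * t ^ (p - 1) = t ^ p := fun p => by
      rw [Real.rpow_sub_one ht.ne', mul_div_cancel₀ _ ht.ne']
    linear_combination (4 * coeffPart n β * (1 - β / 2) * (-(β / 2))) * hsplit (-(β / 2)) +
      (4 * coeffHom n β * (1 - n) * (-n)) * hsplit (-(n : ℝ)) +
      t ^ (-(β / 2)) * coeffPart_mul_sub hβ hβn

theorem wProfile'_pos (hβ : 2 < β) (hβn : β < 2 * n) (t : ℝ) : 0 < wProfile' n β t := by
  have hn := one_lt_of_lt_two_mul hβ hβn
  unfold wProfile'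
  split_ifs with h
  · positivity
  have ht : 1 ≤ t := not_lt.mp h
  have hHom : coeffHom n β * (1 - n) ≤ 0 := by
    refine mul_nonpos_of_nonneg_of_nonpos (div_nonneg (by linarith) ?_) (by linarith)
    exact mul_nonneg (mul_nonneg (by positivity) (by linarith)) (by linarith)
  have hpow : t ^ (-(n : ℝ)) ≤ t ^ (-(β / 2)) :=
    Real.rpow_le_rpow_of_exponent_le ht (by linarith)
  have hpos : 0 < t ^ (-(β / 2)) := Real.rpow_pos_of_pos (by linarith) _
  calc 0 < (coeffPart n β * (1 - β / 2) + coeffHom n β * (1 - n)) * t ^ (-(β / 2)) := by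
        rw [coeff_deriv_match hβ hβn]; positivity
    _ ≤ _ := by nlinarith [mul_le_mul_of_nonpos_left hpow hHom]

theorem continuous_wProfile (hβ : 2 < β) (hβn : β < 2 * n) : Continuous (wProfile n β) :=
  continuous_iff_continuousAt.mpr fun t => (hasDerivAt_wProfile hβ hβn t).continuousAt

theorem tendsto_wProfile_atTop (hβ : 2 < β) (hβn : β < 2 * n) :
    Tendsto (wProfile n β) atTop (𝓝 0) := by
  have hn := one_lt_of_lt_two_mul hβ hβn
  have hpart : Tendsto (fun t : ℝ => t ^ (1 - β / 2)) atTop (𝓝 0) := by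
    simpa using tendsto_rpow_neg_atTop (by linarith : 0 < β / 2 - 1)
  have hhom : Tendsto (fun t : ℝ => t ^ (1 - (n : ℝ))) atTop (𝓝 0) := by
    simpa using tendsto_rpow_neg_atTop (by linarith : 0 < (n : ℝ) - 1)
  have hsum := (hpart.const_mul (coeffPart n β)).add (hhom.const_mul (coeffHom n β))
  rw [mul_zero, mul_zero, add_zero] at hsum
  refine hsum.congr' ?_
  filter_upwards [eventually_ge_atTop 1] with t ht
  rw [wProfile, if_neg (not_lt.mpr ht)]

theorem abs_wProfile_le (hβ : 2 < β) (hβn : β < 2 * n) {t : ℝ} (ht : 0 ≤ t) :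
    |wProfile n β t| ≤ (|coeffPart n β| + |coeffHom n β| + 1) * hProfile (β - 2) t := by
  have hn := one_lt_of_lt_two_mul hβ hβn
  unfold wProfile hProfile
  split_ifs with h
  · have h0 : 0 ≤ (1 - t) / (4 * n) := div_nonneg (by linarith) (by positivity)
    have h1 : (1 - t) / (4 * n) ≤ 1 := (div_le_one (by positivity)).mpr (by linarith)
    calc |coeffPart n β + coeffHom n β - (1 - t) / (4 * n)|
        ≤ |coeffPart n β| + |coeffHom n β| + |(1 - t) / (4 * n)| :=
          (abs_sub _ _).trans (add_le_add_left (abs_add_le _ _) _)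
      _ ≤ _ := by rw [abs_of_nonneg h0]; linarith
  · have h1 : 1 ≤ t := not_lt.mp h
    have hpow : t ^ (1 - (n : ℝ)) ≤ t ^ (1 - β / 2) :=
      Real.rpow_le_rpow_of_exponent_le h1 (by linarith)
    have hpos : 0 < t ^ (1 - (n : ℝ)) := Real.rpow_pos_of_pos (by linarith) _
    rw [show -((β - 2) / 2) = 1 - β / 2 by ring]
    calc |coeffPart n β * t ^ (1 - β / 2) + coeffHom n β * t ^ (1 - (n : ℝ))|
        ≤ |coeffPart n β| * t ^ (1 - β / 2) + |coeffHom n β| * t ^ (1 - (n : ℝ)) := by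
          refine (abs_add_le _ _).trans_eq ?_
          rw [abs_mul, abs_mul, abs_of_pos hpos, abs_of_pos (hpos.trans_le hpow)]
      _ ≤ _ := by nlinarith [mul_le_mul_of_nonneg_left hpow (abs_nonneg (coeffHom n β))]

end Profile

variable {n : ℕ} {β : ℝ}

def radialSol (n : ℕ) (β : ℝ) (x : EuclideanSpace ℝ (Fin (2 * n))) : ℝ := wProfile n β (‖x‖ ^ 2)

theorem radial_radialSol : Radial (radialSol n β) := fun x y h => by rw [radialSol, radialSol, h]

theorem continuous_radialSol (hβ : 2 < β) (hβn : β < 2 * n) : Continuous (radialSol n β) :=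
  (continuous_wProfile hβ hβn).comp (continuous_norm.pow 2)

theorem tendsto_radialSol (hβ : 2 < β) (hβn : β < 2 * n) :
    Tendsto (radialSol n β) (atInfty (2 * n)) (𝓝 0) :=
  (tendsto_wProfile_atTop hβ hβn).comp ((tendsto_pow_atTop two_ne_zero).comp tendsto_comap)

theorem lap_radialSol (hβ : 2 < β) (hβn : β < 2 * n) (x : EuclideanSpace ℝ (Fin (2 * n))) :
    lap (radialSol n β) x = hfun (2 * n) β x := by
  have hfderiv : ∀ᶠ y in 𝓝 x, ∀ i, fderiv ℝ (radialSol n β) y (EuclideanSpace.single i 1) =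
      wProfile' n β (‖y‖ ^ 2) * (2 * y i) :=
    Eventually.of_forall fun y => fderiv_comp_norm_sq_single (hasDerivAt_wProfile hβ hβn _)
  rw [lap_eq_of_fderiv_single_eq hfderiv (hasDerivAt_wProfile' hβ hβn _), hfun_eq_hProfile,
    ← wProfile_ode hβ hβn]
  push_cast
  ring

theorem abs_radialSol_le (hβ : 2 < β) (hβn : β < 2 * n) (x : EuclideanSpace ℝ (Fin (2 * n))) :
    |radialSol n β x| ≤ (|coeffPart n β| + |coeffHom n β| + 1) * hfun (2 * n) (β - 2) x := by
  rw [hfun_eq_hProfile]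
  exact abs_wProfile_le hβ hβn (sq_nonneg _)

section Uniqueness

variable {v : EuclideanSpace ℝ (Fin (2 * n)) → ℝ}

theorem radialProfile_ode (hβ : 2 < β) (hβn : β < 2 * n) (hvr : Radial v)
    (hvl : ∀ x, lap v x = hfun (2 * n) β x) {t : ℝ} (ht : 0 < t) :
    DifferentiableAt ℝ (deriv (radialProfile v)) t ∧
      4 * n * deriv (radialProfile v) t + 4 * t * deriv (deriv (radialProfile v)) t =
        hProfile β t := by
  have hm := two_mul_ne_zero_of_lt_two_mul hβ hβn
  have hlap : lap v (√t • diagUnit (2 * n)) = hProfile β t := by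
    rw [hvl, hfun_eq_hProfile, norm_sqrt_smul_diagUnit hm, Real.sq_sqrt ht.le]
  obtain ⟨hd, heq⟩ := Radial.lap_eq hvr hm ht (hlap ▸ (hProfile_pos β t).ne')
  refine ⟨hd, ?_⟩
  rw [← hlap, heq]
  push_cast
  ring

theorem deriv_radialProfile_eq (hβ : 2 < β) (hβn : β < 2 * n) (hvc : Continuous v)
    (hvr : Radial v) (hvl : ∀ x, lap v x = hfun (2 * n) β x) {t : ℝ} (ht : 0 < t) :
    deriv (radialProfile v) t = wProfile' n β t := by
  have hn := one_lt_of_lt_two_mul hβ hβn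
  have hode := fun {t} (ht : 0 < t) => radialProfile_ode hβ hβn hvr hvl ht
  obtain ⟨K, hK⟩ : ∃ K, ∀ t > 0,
      deriv (radialProfile v) t - wProfile' n β t = K * t ^ (-(n : ℝ)) :=
    exists_eq_mul_rpow_neg_of_euler
      (fun t ht => (hode ht).1.hasDerivAt.sub (hasDerivAt_wProfile' hβ hβn t))
      (fun t ht => by linear_combination ((hode ht).2 - wProfile_ode hβ hβn t) / 4)
  suffices K = 0 by simpa [this, sub_eq_zero] using hK t ht
  -- `deriv` is junk where the profile is not differentiable; for `K ≠ 0` it is nonzero near `0`,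
  -- so there the profile really has derivative `Φ' + K t^(-n)`.
  by_contra hK0
  have hlim : Tendsto (fun t => t ^ (n : ℝ) * wProfile' n β t + K) (𝓝[>] 0) (𝓝 K) := by
    have hcont : ContinuousAt (fun t => t ^ (n : ℝ) * wProfile' n β t + K) 0 :=
      ((Real.continuousAt_rpow_const 0 n (Or.inr (by linarith))).mul
        (hasDerivAt_wProfile' hβ hβn 0).continuousAt).add continuousAt_const
    simpa [Real.zero_rpow (by linarith : (n : ℝ) ≠ 0)] using
      hcont.tendsto.mono_left nhdsWithin_le_nhds
  have hne : ∀ᶠ t in 𝓝[>] 0, deriv (radialProfile v) t ≠ 0 := by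
    filter_upwards [hlim.eventually_ne hK0, self_mem_nhdsWithin] with t h1 (h2 : 0 < t) h0
    apply h1
    rw [show wProfile' n β t = - K * t ^ (-(n : ℝ)) by linarith [hK t h2], Real.rpow_neg h2.le]
    field_simp [(Real.rpow_pos_of_pos h2 (n : ℝ)).ne']
    ring
  refine hK0 (eq_zero_of_hasDerivAt_mul_rpow_neg
    (F := fun t => radialProfile v t - wProfile n β t) (L := radialProfile v 0 - wProfile n β 0)
    hn ?_ ?_)
  · filter_upwards [hne, self_mem_nhdsWithin] with t h1 (h2 : 0 < t)
    rw [← hK t h2]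
    exact (differentiableAt_of_deriv_ne_zero h1).hasDerivAt.sub (hasDerivAt_wProfile hβ hβn t)
  · exact ((continuous_radialProfile hvc).sub
      (continuous_wProfile hβ hβn)).continuousAt.tendsto.mono_left nhdsWithin_le_nhds

theorem eq_radialSol (hβ : 2 < β) (hβn : β < 2 * n) (hvc : Continuous v) (hvr : Radial v)
    (hv0 : Tendsto v (atInfty (2 * n)) (𝓝 0)) (hvl : ∀ x, lap v x = hfun (2 * n) β x) :
    v = radialSol n β := by
  have hm := two_mul_ne_zero_of_lt_two_mul hβ hβn
  have hderiv : ∀ t ∈ Ioi 0, HasDerivAt (fun t => radialProfile v t - wProfile n β t) 0 t := by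
    intro t (ht : 0 < t)
    have h := deriv_radialProfile_eq hβ hβn hvc hvr hvl ht
    have hd := differentiableAt_of_deriv_ne_zero (h ▸ (wProfile'_pos hβ hβn t).ne')
    exact (hd.hasDerivAt.sub (hasDerivAt_wProfile hβ hβn t)).congr_deriv (by rw [h, sub_self])
  have hconst : ∀ t > 0,
      radialProfile v t - wProfile n β t = radialProfile v 1 - wProfile n β 1 := fun t ht =>
    eq_of_hasDerivAt_eq_zero isOpen_Ioi isPreconnected_Ioi hderiv ht (mem_Ioi.mpr one_pos)
  have hV : Tendsto (radialProfile v) atTop (𝓝 0) :=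
    hv0.comp (tendsto_comap_iff.mpr (Real.tendsto_sqrt_atTop.congr fun t =>
      (norm_sqrt_smul_diagUnit hm t).symm))
  have h1 : radialProfile v 1 - wProfile n β 1 = 0 := by
    refine tendsto_nhds_unique (tendsto_const_nhds.congr' ?_)
      (by simpa using hV.sub (tendsto_wProfile_atTop hβ hβn))
    filter_upwards [eventually_gt_atTop 0] with t ht
    exact (hconst t ht).symm
  have heq : EqOn (radialProfile v) (wProfile n β) (Ici 0) :=
    EqOn.of_subset_closure (fun t ht => by linarith [hconst t ht])
      (continuous_radialProfile hvc).continuousOn (continuous_wProfile hβ hβn).continuousOn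
      Ioi_subset_Ici_self (closure_Ioi (0 : ℝ)).ge
  funext x
  rw [Radial.apply_eq_radialProfile hvr hm, radialSol]
  exact heq (sq_nonneg ‖x‖)

end Uniqueness

end RadialPoisson

theorem stmt16_general (n : ℕ) (β : ℝ) (hβ1 : 2 < β) (hβ2 : β < 2 * (n:ℝ)) :
    (∃! w : EuclideanSpace ℝ (Fin (2*n)) → ℝ,
      Continuous w ∧ Radial w ∧ Tendsto w (atInfty (2*n)) (nhds 0) ∧
      ∀ x, lap w x = hfun (2*n) β x) ∧
    ∃ C > (0:ℝ), ∀ w : EuclideanSpace ℝ (Fin (2*n)) → ℝ,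
      (Continuous w ∧ Radial w ∧ Tendsto w (atInfty (2*n)) (nhds 0) ∧
        ∀ x, lap w x = hfun (2*n) β x) →
      ∀ x, |w x| ≤ C * hfun (2*n) (β - 2) x := by
  open RadialPoisson in
  exact ⟨⟨radialSol n β, ⟨continuous_radialSol hβ1 hβ2, radial_radialSol,
      tendsto_radialSol hβ1 hβ2, lap_radialSol hβ1 hβ2⟩,
      fun w ⟨hc, hr, h0, hl⟩ => eq_radialSol hβ1 hβ2 hc hr h0 hl⟩,
    |coeffPart n β| + |coeffHom n β| + 1, by positivity,
    fun w ⟨hc, hr, h0, hl⟩ x => eq_radialSol hβ1 hβ2 hc hr h0 hl ▸ abs_radialSol_le hβ1 hβ2 x⟩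

/-- For `2 < β < 2n` there is a unique radial continuous `w` vanishing at infinity with
`Δ w = h_β` in `ℝ^{2n}`, and `|w| ≤ C_{n,β} h_{β-2}`. -/
theorem stmt16 (n : ℕ) (hn : 2 ≤ n) (β : ℝ) (hβ1 : 2 < β) (hβ2 : β < 2 * (n:ℝ)) :
    (∃! w : EuclideanSpace ℝ (Fin (2*n)) → ℝ,
      Continuous w ∧ Radial w ∧ Tendsto w (atInfty (2*n)) (nhds 0) ∧
      ∀ x, lap w x = hfun (2*n) β x) ∧
    ∃ C > (0:ℝ), ∀ w : EuclideanSpace ℝ (Fin (2*n)) → ℝ,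
      (Continuous w ∧ Radial w ∧ Tendsto w (atInfty (2*n)) (nhds 0) ∧
        ∀ x, lap w x = hfun (2*n) β x) →
      ∀ x, |w x| ≤ C * hfun (2*n) (β - 2) x :=
  stmt16_general n β hβ1 hβ2
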